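/- Let x, y be real numbers with x + y < 1 and y < 1, and let h(z) = ₃F₂(z−y, z, z; x−y+z, 1−x−y+z; 1) for z in a neighborhood of 0, assuming neither x−y nor 1−x−y is a nonpositive integer. Then h is differentiable at z = 0 and h′(0) = 0. -/

import Mathlib

open scoped BigOperators

/-- The Pochhammer symbol `(a)ₙ = a (a+1) ⋯ (a+n-1)`. -/
noncomputable def poch (a : ℝ) (n : ℕ) : ℝ := ∏ i ∈ Finset.range n, (a + i)

/-- The generalized hypergeometric series `₃F₂(a₁,a₂,a₃; b₁,b₂; 1)` at `x = 1`. -/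
noncomputable def F32 (a₁ a₂ a₃ b₁ b₂ : ℝ) : ℝ :=
  ∑' n : ℕ,
    poch a₁ n * poch a₂ n * poch a₃ n /
      (poch b₁ n * poch b₂ n * (Nat.factorial n : ℝ))

/-- `t` is not a nonpositive integer. -/
def NotNonposInt (t : ℝ) : Prop := ∀ m : ℕ, t ≠ -(m : ℝ)

/-!
Write `h(z) = ∑ tₙ(z)`. Two numerator parameters equal `z`, so every term with `n ≥ 1` carries the
factor `((z)ₙ)²` and is `O(z²)`, while `t₀ = 1`. The parameter excess of the series is `1 - y - z`,
so for some `p > 1` the ratio test in Raabe's form, `|tₙ₊₁ / tₙ| ≤ 1 - p / (n + 1)`, holds for all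
large `n` uniformly in `z` near `0`; it telescopes to a bound of the whole tail by a fixed multiple
of a single term. Hence `h(z) - 1 = O(z²)`, and `h'(0) = 0`.
-/

open Filter Topology Asymptotics Finset

lemma poch_succ' (a : ℝ) (n : ℕ) : poch a (n + 1) = a * poch (a + 1) n := by
  rw [poch, prod_range_succ', Nat.cast_zero, add_zero, mul_comm]
  exact congrArg _ (prod_congr rfl fun i _ => by push_cast; ring)

lemma poch_ne_zero {a : ℝ} (ha : NotNonposInt a) (n : ℕ) : poch a n ≠ 0 :=
  prod_ne_zero_iff.mpr fun i _ hi => ha i (eq_neg_of_add_eq_zero_left hi)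

@[fun_prop]
lemma continuous_poch (n : ℕ) : Continuous fun a => poch a n :=
  continuous_finsetProd _ fun _ _ => continuous_id.add continuous_const

-- Raabe's ratio condition `|u (n + 1) / u n| ≤ 1 - p / (n + 1)` with the denominators cleared.
def RaabeCondition (p : ℝ) (N : ℕ) (u : ℕ → ℝ) : Prop :=
  ∀ n, N ≤ n → (n + 1) * |u (n + 1)| ≤ (n + 1 - p) * |u n|

namespace RaabeCondition

variable {u : ℕ → ℝ} {p : ℝ} {N : ℕ}

lemma mul_sum_add_le (h : RaabeCondition p N u) (k : ℕ) :
    (p - 1) * ∑ i ∈ range k, |u (i + N)| + (k + N) * |u (k + N)| ≤ N * |u N| := by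
  induction k with
  | zero => simp
  | succ k ih =>
    have := h (k + N) (by omega)
    rw [sum_range_succ, show k + 1 + N = k + N + 1 by omega]
    push_cast at this ⊢
    linarith

lemma summable_abs_and_tsum_le (h : RaabeCondition p N u) (hp : 1 < p) :
    Summable (fun n => |u n|) ∧ ∑' i, |u (i + N)| ≤ N * |u N| / (p - 1) := by
  have partial_le : ∀ k, ∑ i ∈ range k, |u (i + N)| ≤ N * |u N| / (p - 1) := fun k => by
    rw [le_div_iff₀ (by linarith), mul_comm]
    nlinarith [h.mul_sum_add_le k, abs_nonneg (u (k + N))]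
  exact ⟨(summable_nat_add_iff N).mp (summable_of_sum_range_le (fun _ => abs_nonneg _) partial_le),
    Real.tsum_le_of_sum_range_le (fun _ => abs_nonneg _) partial_le⟩

lemma mono {M : ℕ} (h : RaabeCondition p N u) (hNM : N ≤ M) : RaabeCondition p M u :=
  fun n hn => h n (hNM.trans hn)

end RaabeCondition

lemma isBigO_tsum_sub_of_raabeCondition {α F : Type*} [Norm F] {l : Filter α} {g : α → F}
    {T : α → ℕ → ℝ} {p : ℝ} {N : ℕ} (hp : 1 < p)
    (hraabe : ∀ᶠ z in l, RaabeCondition p N (T z))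
    (hT : ∀ n, (fun z => T z (n + 1)) =O[l] g) :
    (fun z => ∑' n, T z n - T z 0) =O[l] g := by
  have hsplit : ∀ᶠ z in l,
      ∑' n, T z n - T z 0 = ∑ i ∈ range N, T z (i + 1) + ∑' i, T z (i + (N + 1)) ∧
        ‖∑' i, T z (i + (N + 1))‖ ≤ (N + 1) / (p - 1) * ‖T z (N + 1)‖ := by
    filter_upwards [hraabe] with z hz
    obtain ⟨hsum, htail⟩ := (hz.mono N.le_succ).summable_abs_and_tsum_le hp
    refine ⟨?_, ?_⟩
    · rw [← hsum.of_abs.sum_add_tsum_nat_add (N + 1), sum_range_succ']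
      ring
    · have habs : Summable fun i => ‖T z (i + (N + 1))‖ :=
        (summable_nat_add_iff (f := fun n => |T z n|) (N + 1)).mpr hsum
      calc ‖∑' i, T z (i + (N + 1))‖ ≤ ∑' i, ‖T z (i + (N + 1))‖ := norm_tsum_le_tsum_norm habs
        _ ≤ (N + 1) / (p - 1) * ‖T z (N + 1)‖ := by
            simp only [Real.norm_eq_abs]
            push_cast at htail
            rwa [div_mul_eq_mul_div]
  have hhead : (fun z => ∑ i ∈ range N, T z (i + 1)) =O[l] g := IsBigO.fun_sum fun i _ => hT i
  have htail : (fun z => ∑' i, T z (i + (N + 1))) =O[l] g :=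
    (IsBigO.of_bound _ (hsplit.mono fun z hz => hz.2)).trans (hT N)
  exact (hhead.add htail).congr' (hsplit.mono fun z hz => hz.1.symm) EventuallyEq.rfl

lemma eventually_cubic_le {a₁ a₂ a₃ b₁ b₂ b₃ : ℝ} (h : a₁ + a₂ + a₃ < b₁ + b₂ + b₃) :
    ∀ᶠ m : ℝ in atTop, (m + a₁) * (m + a₂) * (m + a₃) ≤ (m + b₁) * (m + b₂) * (m + b₃) := by
  set κ := b₁ + b₂ + b₃ - (a₁ + a₂ + a₃)
  set β := b₁ * b₂ + b₁ * b₃ + b₂ * b₃ - (a₁ * a₂ + a₁ * a₃ + a₂ * a₃)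
  set γ := b₁ * b₂ * b₃ - a₁ * a₂ * a₃
  have hκ : 0 < κ := sub_pos.mpr h
  filter_upwards [eventually_ge_atTop 1,
    (tendsto_id.const_mul_atTop hκ).eventually_ge_atTop (|β| + |γ|)]
    with m hm (hκm : |β| + |γ| ≤ κ * m)
  have : 0 ≤ κ * m ^ 2 + β * m + γ := by
    nlinarith [mul_le_mul_of_nonneg_right hκm (by linarith : 0 ≤ m),
      mul_nonneg (neg_le_iff_add_nonneg.mp (neg_abs_le β)) (by linarith : 0 ≤ m),
      mul_nonneg (abs_nonneg γ) (sub_nonneg.mpr hm), neg_abs_le γ]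
  linarith [show (m + b₁) * (m + b₂) * (m + b₃) - (m + a₁) * (m + a₂) * (m + a₃)
    = κ * m ^ 2 + β * m + γ by ring]

noncomputable def F32Term (a₁ a₂ a₃ b₁ b₂ : ℝ) (n : ℕ) : ℝ :=
  poch a₁ n * poch a₂ n * poch a₃ n / (poch b₁ n * poch b₂ n * (Nat.factorial n : ℝ))

lemma F32_eq_tsum_F32Term (a₁ a₂ a₃ b₁ b₂ : ℝ) :
    F32 a₁ a₂ a₃ b₁ b₂ = ∑' n, F32Term a₁ a₂ a₃ b₁ b₂ n := rfl

@[simp] lemma F32Term_zero (a₁ a₂ a₃ b₁ b₂ : ℝ) : F32Term a₁ a₂ a₃ b₁ b₂ 0 = 1 := by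
  simp [F32Term, poch]

lemma F32Term_succ (a₁ a₂ a₃ b₁ b₂ : ℝ) (n : ℕ) :
    F32Term a₁ a₂ a₃ b₁ b₂ (n + 1) = F32Term a₁ a₂ a₃ b₁ b₂ n *
      ((a₁ + n) * (a₂ + n) * (a₃ + n) / ((b₁ + n) * (b₂ + n) * (n + 1))) := by
  simp only [F32Term, poch, prod_range_succ, Nat.factorial_succ, Nat.cast_mul, Nat.cast_succ]
  rw [div_mul_div_comm]
  congr 1 <;> ring

lemma mul_abs_F32Term_succ_le {a₁ a₂ a₃ b₁ b₂ p : ℝ} {n : ℕ} (hb : (b₁ + n) * (b₂ + n) ≠ 0)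
    (h : |(a₁ + n) * (a₂ + n) * (a₃ + n)| ≤ (n + 1 - p) * |(b₁ + n) * (b₂ + n)|) :
    (n + 1) * |F32Term a₁ a₂ a₃ b₁ b₂ (n + 1)| ≤ (n + 1 - p) * |F32Term a₁ a₂ a₃ b₁ b₂ n| := by
  have hn : (0 : ℝ) < n + 1 := by positivity
  have hratio : |(a₁ + n) * (a₂ + n) * (a₃ + n)| / |(b₁ + n) * (b₂ + n)| ≤ n + 1 - p :=
    (div_le_iff₀ (abs_pos.mpr hb)).mpr h
  calc (n + 1) * |F32Term a₁ a₂ a₃ b₁ b₂ (n + 1)|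
      = |F32Term a₁ a₂ a₃ b₁ b₂ n| *
          (|(a₁ + n) * (a₂ + n) * (a₃ + n)| / |(b₁ + n) * (b₂ + n)|) := by
        rw [F32Term_succ, abs_mul, abs_div, abs_mul _ ((n : ℝ) + 1), abs_of_pos hn]
        field_simp
    _ ≤ (n + 1 - p) * |F32Term a₁ a₂ a₃ b₁ b₂ n| := by
        rw [mul_comm]; exact mul_le_mul_of_nonneg_right hratio (abs_nonneg _)

lemma exists_eventually_raabeCondition_F32Term_add {a₁ a₂ a₃ b₁ b₂ p : ℝ}
    (hp : p < 1 + (b₁ + b₂ - a₁ - a₂ - a₃)) :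
    ∃ N : ℕ, ∀ᶠ z in 𝓝 0,
      RaabeCondition p N (F32Term (a₁ + z) (a₂ + z) (a₃ + z) (b₁ + z) (b₂ + z)) := by
  obtain ⟨δ, hδp, hδ⟩ := exists_add_lt_and_pos_of_lt hp
  obtain ⟨M, hM⟩ := eventually_atTop.mp <|
    (eventually_cubic_le (a₁ := a₁) (a₂ := a₂) (a₃ := a₃) (b₁ := 1 - p - δ) (b₂ := b₁) (b₃ := b₂)
      (by linarith)).and (eventually_ge_atTop (|a₁| + |a₂| + |a₃| + |b₁| + |b₂| + 1))
  refine ⟨⌈M + δ⌉₊, ?_⟩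
  filter_upwards [Metric.closedBall_mem_nhds 0 hδ] with z hz n hn
  rw [Metric.mem_closedBall, dist_zero_right, Real.norm_eq_abs, abs_le] at hz
  have hMn : M + δ ≤ n := Nat.ceil_le.mp hn
  -- The shift by `z` is absorbed into the variable `m = n + z ≥ M`, which makes the bound uniform.
  set m : ℝ := n + z
  obtain ⟨hcubic, hlarge⟩ := hM m (by simp only [m]; linarith)
  obtain ⟨ha₁, ha₂, ha₃, hb₁, hb₂⟩ :
      0 < m + a₁ ∧ 0 < m + a₂ ∧ 0 < m + a₃ ∧ 0 < m + b₁ ∧ 0 < m + b₂ := by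
    refine ⟨?_, ?_, ?_, ?_, ?_⟩ <;>
      linarith [neg_abs_le a₁, neg_abs_le a₂, neg_abs_le a₃, neg_abs_le b₁, neg_abs_le b₂,
        abs_nonneg a₁, abs_nonneg a₂, abs_nonneg a₃, abs_nonneg b₁, abs_nonneg b₂]
  have hB : 0 < (m + b₁) * (m + b₂) := mul_pos hb₁ hb₂
  have shift : ∀ c : ℝ, c + z + n = m + c := fun c => by simp only [m]; ring
  apply mul_abs_F32Term_succ_le <;> simp only [shift]
  · exact hB.ne'
  · rw [abs_of_pos (by positivity), abs_of_pos hB]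
    calc (m + a₁) * (m + a₂) * (m + a₃) ≤ (m + (1 - p - δ)) * (m + b₁) * (m + b₂) := hcubic
      _ ≤ (n + 1 - p) * ((m + b₁) * (m + b₂)) := by
        rw [mul_assoc]; exact mul_le_mul_of_nonneg_right (by simp only [m]; linarith) hB.le

lemma F32Term_add_succ_isBigO_sq (a₁ : ℝ) {b₁ b₂ : ℝ} (hb₁ : NotNonposInt b₁)
    (hb₂ : NotNonposInt b₂) (n : ℕ) :
    (fun z => F32Term (a₁ + z) z z (b₁ + z) (b₂ + z) (n + 1)) =O[𝓝 0] fun z => z ^ 2 := by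
  set g : ℝ → ℝ := fun z => poch (a₁ + z) (n + 1) * poch (z + 1) n * poch (z + 1) n /
    (poch (b₁ + z) (n + 1) * poch (b₂ + z) (n + 1) * ((n + 1).factorial : ℝ))
  have hg : ContinuousAt g 0 := by
    refine ContinuousAt.div (by fun_prop) (by fun_prop) ?_
    simpa using ⟨⟨poch_ne_zero hb₁ _, poch_ne_zero hb₂ _⟩, (n + 1).factorial_ne_zero⟩
  have hfactor : (fun z => F32Term (a₁ + z) z z (b₁ + z) (b₂ + z) (n + 1)) =
      fun z => z ^ 2 * g z := by
    ext z
    simp only [F32Term, g, poch_succ' z]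
    ring
  rw [hfactor]
  simpa using (isBigO_refl (fun z : ℝ => z ^ 2) (𝓝 0)).mul (hg.tendsto.isBigO_one ℝ)

lemma hasDerivAt_zero_of_isBigO_sq {F : ℝ → ℝ} {c x : ℝ}
    (h : (fun z => F z - c) =O[𝓝 x] fun z => (z - x) ^ 2) : HasDerivAt F 0 x := by
  have hc : F x = c := sub_eq_zero.mp (h.eq_zero_imp.self_of_nhds (by simp))
  rw [hasDerivAt_iff_isLittleO]
  simpa [hc] using h.trans_isLittleO (by simpa using isLittleO_pow_sub_sub x one_lt_two)

theorem deriv_F32_eq_zero_general (x y : ℝ) (hy : y < 1)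
    (h₁ : NotNonposInt (x - y)) (h₂ : NotNonposInt (1 - x - y)) :
    HasDerivAt (fun z => F32 (z - y) z z (x - y + z) (1 - x - y + z)) 0 0 := by
  obtain ⟨N, hN⟩ := exists_eventually_raabeCondition_F32Term_add (a₁ := -y) (a₂ := 0) (a₃ := 0)
    (b₁ := x - y) (b₂ := 1 - x - y) (p := 1 + (1 - y) / 2) (by linarith)
  simp only [zero_add] at hN
  have hO := isBigO_tsum_sub_of_raabeCondition (by linarith) hN
    (F32Term_add_succ_isBigO_sq (-y) h₁ h₂)
  refine hasDerivAt_zero_of_isBigO_sq (c := 1) ?_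
  simpa [F32_eq_tsum_F32Term, neg_add_eq_sub] using hO

theorem deriv_F32_eq_zero (x y : ℝ) (hxy : x + y < 1) (hy : y < 1)
    (h₁ : NotNonposInt (x - y)) (h₂ : NotNonposInt (1 - x - y)) :
    HasDerivAt (fun z => F32 (z - y) z z (x - y + z) (1 - x - y + z)) 0 0 :=
  deriv_F32_eq_zero_general x y hy h₁ h₂
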